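/- arXiv:1703.06644 — 2 statements merged into one kernel-verified Lean document; each statement's English description precedes it below -/
import Mathlib

section
/- For every t ≥ 2 and l ≥ 1, there exists an alphabet Σ, a family of t strings of length 2l+3 over Σ, and an optimal length-l closest substring v_opt of cost 0, such that every length-(l+1) substring extension of the occurrences of v_opt has cost at least t, while the optimal length-(l+1) closest substring has cost 1. -/
/-!
Take `vopt = Cˡ`, `S₁ = Bˡ A B α₁ Cˡ` and `Sᵢ = Cˡ αᵢ Bˡ⁺²` for `i ≠ 1`. The word `Cˡ` occurs
exactly once in each string, so its only extensions are `α₁ Cˡ` in `S₁` and `Cˡ αᵢ` in the other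
strings. Count the mismatches of a word `v'` against these extensions column by column: the first
column is not constant, so it contributes at least one mismatch, and the last column has pairwise
distinct letters, so it contributes at least `t - 1`.

The word `Bˡ⁺¹` occurs in every `Sᵢ` with `i ≠ 1` and is at distance one from the prefix `Bˡ A`
of `S₁`, whereas no word of length `l + 1` occurs in both `S₀` and `S₁`.
-/

/-- The minimum Hamming distance between a pattern `v` of length `m` and the
length-`m` substrings of a string `Si` of length `n`. -/
def substrDist {α : Type} [DecidableEq α] {n : ℕ} (m : ℕ) (hm : m ≤ n)
    (Si : Fin n → α) (v : Fin m → α) : ℕ :=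
  Finset.inf' (Finset.univ : Finset (Fin (n - m + 1)))
    ⟨⟨0, Nat.succ_pos _⟩, Finset.mem_univ _⟩
    (fun q => hammingDist v (fun j => Si ⟨q.val + j.val, by
      have h1 := q.2; have h2 := j.2; omega⟩))

/-- The cost of a length-`m` pattern `v` against a family `S` of `t` strings of
length `n`: the sum over the family of the minimum Hamming distance to a
length-`m` substring. -/
def cost {α : Type} [DecidableEq α] {t n : ℕ} (m : ℕ) (hm : m ≤ n)
    (S : Fin t → Fin n → α) (v : Fin m → α) : ℕ :=
  ∑ i : Fin t, substrDist m hm (S i) v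

open Finset

section Substrings

variable {α : Type} [DecidableEq α] {n m : ℕ}

theorem substrDist_le_hammingDist (hm : m ≤ n) (s : Fin n → α) (v : Fin m → α) (q : ℕ)
    (hq : q + m ≤ n) :
    substrDist m hm s v ≤ hammingDist v (fun j => s ⟨q + j, by omega⟩) :=
  inf'_le _ (mem_univ (⟨q, by omega⟩ : Fin (n - m + 1)))

theorem substrDist_eq_zero_iff (hm : m ≤ n) (s : Fin n → α) (v : Fin m → α) :
    substrDist m hm s v = 0 ↔
      ∃ (q : ℕ) (hq : q + m ≤ n), ∀ j : Fin m, v j = s ⟨q + j, by omega⟩ := by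
  constructor
  · intro h
    obtain ⟨q, -, hq⟩ := exists_mem_eq_inf' (s := (univ : Finset (Fin (n - m + 1))))
      ⟨⟨0, Nat.succ_pos _⟩, mem_univ _⟩
      (fun q => hammingDist v (fun j => s ⟨q.val + j.val, by omega⟩))
    rw [substrDist, hq, hammingDist_eq_zero] at h
    exact ⟨q, by omega, congrFun h⟩
  · rintro ⟨q, hq, hv⟩
    apply Nat.eq_zero_of_le_zero
    calc substrDist m hm s v ≤ hammingDist v (fun j => s ⟨q + j, by omega⟩) :=
          substrDist_le_hammingDist hm s v q hq
      _ = 0 := hammingDist_eq_zero.mpr (funext hv)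

end Substrings

section Columns

variable {ι κ β : Type} [Fintype ι] [Fintype κ] [DecidableEq β]

theorem sum_hammingDist_eq_sum_card_ne (v : κ → β) (y : ι → κ → β) :
    ∑ i, hammingDist v (y i) = ∑ j, #{i | v j ≠ y i j} := by
  simp only [hammingDist, card_filter]
  exact sum_comm

theorem card_sub_one_le_card_ne_of_injective {c : ι → β} (hc : Function.Injective c) (a : β) :
    Fintype.card ι - 1 ≤ #{i | a ≠ c i} := by
  have hmatch : #{i | a = c i} ≤ 1 :=
    card_le_one.mpr fun i hi k hk => hc (by simp only [mem_filter] at hi hk; rw [← hi.2, ← hk.2])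
  have := card_filter_add_card_filter_not (s := univ) (fun i => a = c i)
  simp only [card_univ, ← ne_eq] at this
  omega

theorem one_le_card_ne_of_ne {c : ι → β} {x y : ι} (h : c x ≠ c y) (a : β) :
    1 ≤ #{i | a ≠ c i} := by
  by_cases hx : a = c x
  · exact card_pos.mpr ⟨y, mem_filter.mpr ⟨mem_univ y, hx ▸ h⟩⟩
  · exact card_pos.mpr ⟨x, mem_filter.mpr ⟨mem_univ x, hx⟩⟩

end Columns

-- Letters `A = 0`, `B = 1`, `C = 2`, `αᵢ = i + 3`; the strings are
-- `S₁ = Bˡ A B α₁ Cˡ` and `Sᵢ = Cˡ αᵢ Bˡ⁺² (i ≠ 1)`.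
def hardString (l i x : ℕ) : ℕ :=
  if i = 1 then
    if x < l then 1 else if x = l then 0 else if x = l + 1 then 1 else if x = l + 2 then 4 else 2
  else
    if x < l then 2 else if x = l then i + 3 else 1

def hardFamily (t l : ℕ) : Fin t → Fin (2 * l + 3) → ℕ := fun i x => hardString l i x

def extensionStart (l i : ℕ) : ℕ := if i = 1 then l + 2 else 0

section HardFamily

variable {t l : ℕ}

theorem cost_hardFamily_const_C (hm : l ≤ 2 * l + 3) :
    cost l hm (hardFamily t l) (fun _ => 2) = 0 := by
  refine sum_eq_zero fun i _ => (substrDist_eq_zero_iff _ _ _).mpr ?_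
  refine ⟨if (i : ℕ) = 1 then l + 3 else 0, by split_ifs <;> omega, fun j => ?_⟩
  have := j.2
  simp only [hardFamily, hardString]
  split_ifs <;> omega

theorem extension_start_eq (hl : 1 ≤ l) {i q p : ℕ} (hq : q + (l + 1) ≤ 2 * l + 3)
    (hp : p + l ≤ 2 * l + 3) (hqp : q ≤ p) (hpq : p ≤ q + 1)
    (hocc : ∀ j < l, hardString l i (p + j) = 2) : q = extensionStart l i := by
  have hfirst := hocc 0 hl
  have hlast := hocc (l - 1) (by omega)
  simp only [hardString, extensionStart] at hfirst hlast ⊢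
  split_ifs at hfirst hlast ⊢ <;> omega

theorem le_sum_hammingDist_extension (ht : 2 ≤ t) (hl : 1 ≤ l) (v : Fin (l + 1) → ℕ) :
    t ≤ ∑ i : Fin t, hammingDist v (fun j => hardString l i (extensionStart l i + j)) := by
  rw [sum_hammingDist_eq_sum_card_ne]
  have hfirst :
      1 ≤ #{i : Fin t | v 0 ≠ hardString l i (extensionStart l i + (0 : Fin (l + 1)))} :=
    one_le_card_ne_of_ne (x := ⟨0, by omega⟩) (y := ⟨1, by omega⟩)
      (by
        simp only [hardString, extensionStart, Fin.val_zero, zero_ne_one, ↓reduceIte]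
        split_ifs <;> omega) _
  have hinj : Function.Injective
      (fun i : Fin t => hardString l i (extensionStart l i + (Fin.last l : Fin (l + 1)))) := by
    intro a b hab
    have := a.2
    simp only [Fin.val_last, hardString, extensionStart] at hab
    ext
    split_ifs at hab <;> omega
  have hlast := card_sub_one_le_card_ne_of_injective hinj (v (Fin.last l))
  rw [Fintype.card_fin] at hlast
  have hne : (0 : Fin (l + 1)) ≠ Fin.last l := by
    rw [Ne, Fin.ext_iff, Fin.val_zero, Fin.val_last]; omega
  calc t ≤ 1 + (t - 1) := by omega
    _ ≤ _ := add_le_add hfirst hlast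
    _ = ∑ j ∈ {0, Fin.last l}, #{i : Fin t | v j ≠ hardString l i (extensionStart l i + j)} :=
        by rw [sum_pair hne]
    _ ≤ _ := sum_le_sum_of_subset (subset_univ _)

theorem one_le_cost_hardFamily (ht : 2 ≤ t) (hl : 1 ≤ l) (hm : l + 1 ≤ 2 * l + 3)
    (w : Fin (l + 1) → ℕ) : 1 ≤ cost (l + 1) hm (hardFamily t l) w := by
  by_contra! h
  have hzero := sum_eq_zero_iff.mp (Nat.lt_one_iff.mp h)
  obtain ⟨q₀, hq₀, hw₀⟩ :=
    (substrDist_eq_zero_iff _ _ _).mp (hzero ⟨0, by omega⟩ (mem_univ _))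
  obtain ⟨q₁, hq₁, hw₁⟩ :=
    (substrDist_eq_zero_iff _ _ _).mp (hzero ⟨1, by omega⟩ (mem_univ _))
  have hagree (j : ℕ) (hj : j < l + 1) : hardString l 0 (q₀ + j) = hardString l 1 (q₁ + j) :=
    (hw₀ ⟨j, hj⟩).symm.trans (hw₁ ⟨j, hj⟩)
  -- every window of `S₀` contains `α₀` or lies in `Bˡ⁺²`, while every window of `S₁`
  -- contains `A` or `α₁`
  obtain ⟨j, hj, hdiff⟩ : ∃ j < l + 1, hardString l 0 (q₀ + j) ≠ hardString l 1 (q₁ + j) := by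
    by_cases h₀ : q₀ ≤ l
    · refine ⟨l - q₀, by omega, ?_⟩
      simp only [hardString, zero_ne_one, ↓reduceIte]; split_ifs <;> omega
    by_cases h₁ : q₁ ≤ l
    · refine ⟨l - q₁, by omega, ?_⟩
      simp only [hardString, zero_ne_one, ↓reduceIte]; split_ifs <;> omega
    · refine ⟨l + 2 - q₁, by omega, ?_⟩
      simp only [hardString, zero_ne_one, ↓reduceIte]; split_ifs <;> omega
  exact hdiff (hagree j hj)

theorem cost_hardFamily_const_B_le_one (ht : 2 ≤ t) (hm : l + 1 ≤ 2 * l + 3) :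
    cost (l + 1) hm (hardFamily t l) (fun _ => 1) ≤ 1 := by
  let i₁ : Fin t := ⟨1, by omega⟩
  have hbound (i : Fin t) :
      substrDist (l + 1) hm (hardFamily t l i) (fun _ => 1) ≤ if i = i₁ then 1 else 0 := by
    split_ifs with hi
    · subst hi
      refine (substrDist_le_hammingDist _ _ _ 0 (by omega)).trans ?_
      refine card_le_one.mpr fun a ha b hb => ?_
      simp only [mem_filter, mem_univ, true_and, hardFamily, hardString, i₁] at ha hb
      ext
      split_ifs at ha hb <;> omega
    · refine ((substrDist_eq_zero_iff _ _ _).mpr ⟨l + 2, by omega, fun j => ?_⟩).le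
      have := j.2
      have : (i : ℕ) ≠ 1 := fun h => hi (Fin.ext h)
      simp only [hardFamily, hardString]
      split_ifs <;> omega
  calc cost (l + 1) _ (hardFamily t l) (fun _ => 1) ≤ ∑ i : Fin t, if i = i₁ then 1 else 0 :=
        sum_le_sum fun i _ => hbound i
    _ = 1 := by simp

end HardFamily

theorem hard_instance_exists (t l : ℕ) (ht : 2 ≤ t) (hl : 1 ≤ l) :
    ∃ (α : Type) (_ : DecidableEq α) (S : Fin t → Fin (2 * l + 3) → α)
      (vopt : Fin l → α),
      -- `vopt` is an optimal length-`l` closest substring of cost 0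
      cost l (by omega) S vopt = 0 ∧
      -- every family of length-(l+1) substring extensions of the occurrences
      -- of `vopt` has cost at least `t`
      (∀ y' : Fin t → Fin (l + 1) → α,
        (∀ i, ∃ (q p : ℕ) (hq : q + (l + 1) ≤ 2 * l + 3)
            (hp : p + l ≤ 2 * l + 3),
          q ≤ p ∧ p ≤ q + 1 ∧
          (∀ j : Fin l, S i ⟨p + j.val, by have := j.2; omega⟩ = vopt j) ∧
          (∀ j : Fin (l + 1), y' i j = S i ⟨q + j.val, by have := j.2; omega⟩)) →
        ∀ v' : Fin (l + 1) → α, t ≤ ∑ i : Fin t, hammingDist v' (y' i)) ∧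
      -- the optimal length-(l+1) closest substring has cost 1
      (∃ w : Fin (l + 1) → α, cost (l + 1) (by omega) S w = 1) ∧
      (∀ w : Fin (l + 1) → α, 1 ≤ cost (l + 1) (by omega) S w) := by
  refine ⟨ℕ, inferInstance, hardFamily t l, fun _ => 2, cost_hardFamily_const_C _, ?_,
    ⟨fun _ => 1,
      (cost_hardFamily_const_B_le_one ht _).antisymm (one_le_cost_hardFamily ht hl _ _)⟩,
    one_le_cost_hardFamily ht hl _⟩
  intro y' hy' v'
  have hext (i : Fin t) :
      y' i = fun j : Fin (l + 1) => hardString l i (extensionStart l i + j) := by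
    obtain ⟨q, p, hq, hp, hqp, hpq, hocc, hy⟩ := hy' i
    obtain rfl := extension_start_eq hl hq hp hqp hpq fun j hj => hocc ⟨j, hj⟩
    exact funext hy
  simpa only [hext] using le_sum_hammingDist_extension ht hl v'
end

section
/- In the hard instance family (Sⱼ = αⱼ B^l αⱼ A^{l−1} B A and Sᵢ = αᵢ B^l αᵢ A^{l+1} for i ≠ j), the string A^{l+1} has cost exactly 1 as a length-(l+1) closest substring of the family, achieved because A^{l+1} is a substring of every Sᵢ with i ≠ j and the best length-(l+1) substring of Sⱼ differs from A^{l+1} in exactly one position. -/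
/-- The hard instance family: symbols `A = 0`, `B = 1`, `αᵢ = i + 2` in `Fin (t+2)`.
`S j = αⱼ B^l αⱼ A^(l-1) B A` for the fixed index `j`, and
`S i = αᵢ B^l αᵢ A^(l+1)` for `i ≠ j`; all strings have length `2l+3`. -/
def hardS (t l : ℕ) (j : Fin t) : Fin t → Fin (2 * l + 3) → Fin (t + 2) :=
  fun i m =>
    if m.val = 0 ∨ m.val = l + 1 then ⟨i.val + 2, by have := i.2; omega⟩
    else if m.val ≤ l then 1
    else if i = j ∧ m.val = 2 * l + 1 then 1
    else 0

/-!
A copy of `A^{l+1}` sits at the end of every `Sᵢ` with `i ≠ j`, so those strings contribute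
nothing. In `Sⱼ` the window of the last `l + 1` symbols is `A^{l-1} B A`, at distance one;
every other window starts inside the prefix `αⱼ B^l αⱼ`, which contains no `A`, so no window
of `Sⱼ` equals `A^{l+1}`.
-/

open Finset

theorem hammingDist_le_card_of_forall_notMem {ι : Type*} [Fintype ι] {β : ι → Type*}
    [∀ i, DecidableEq (β i)] {x y : ∀ i, β i} (s : Finset ι) (h : ∀ i ∉ s, x i = y i) :
    hammingDist x y ≤ s.card :=
  card_le_card fun i hi => by
    by_contra hs
    exact (mem_filter.1 hi).2 (h i hs)

section Substrings

variable {α : Type} [DecidableEq α] {n m : ℕ}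

def window (hm : m ≤ n) (S : Fin n → α) (q : Fin (n - m + 1)) : Fin m → α :=
  fun k => S ⟨q + k, by have := q.2; have := k.2; omega⟩

theorem substrDist_le_hammingDist_window (hm : m ≤ n) (S : Fin n → α) (v : Fin m → α)
    (q : Fin (n - m + 1)) : substrDist m hm S v ≤ hammingDist v (window hm S q) :=
  inf'_le _ (mem_univ q)

theorem substrDist_eq_zero_of_window_eq {hm : m ≤ n} {S : Fin n → α} {v : Fin m → α}
    (q : Fin (n - m + 1)) (h : window hm S q = v) : substrDist m hm S v = 0 :=
  Nat.eq_zero_of_le_zero <| by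
    simpa [h] using substrDist_le_hammingDist_window hm S v q

theorem substrDist_pos_iff {hm : m ≤ n} {S : Fin n → α} {v : Fin m → α} :
    0 < substrDist m hm S v ↔ ∀ q, window hm S q ≠ v := by
  refine (lt_inf'_iff (f := fun q => hammingDist v (window hm S q)) _).trans ?_
  simp only [mem_univ, true_implies, hammingDist_pos, ne_comm]

end Substrings

theorem hardS_eq_zero_iff {t l : ℕ} {j i : Fin t} {p : Fin (2 * l + 3)} :
    hardS t l j i p = 0 ↔ l + 1 < p ∧ ¬(i = j ∧ p = 2 * l + 1) := by
  unfold hardS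
  split_ifs <;> simp [Fin.ext_iff] <;> omega

section HardInstance

variable {t l : ℕ} {j : Fin t} {hm : l + 1 ≤ 2 * l + 3}

theorem substrDist_hardS_of_ne {i : Fin t} (hij : i ≠ j) :
    substrDist (l + 1) hm (hardS t l j i) (fun _ => 0) = 0 :=
  substrDist_eq_zero_of_window_eq ⟨l + 2, by omega⟩ <| funext fun k =>
    hardS_eq_zero_iff.2 ⟨by simp only; omega, fun h => hij h.1⟩

theorem substrDist_hardS_self (hl : 1 ≤ l) :
    substrDist (l + 1) hm (hardS t l j j) (fun _ => 0) = 1 := by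
  refine le_antisymm ?_ (substrDist_pos_iff.2 fun q hq => ?_)
  · refine (substrDist_le_hammingDist_window hm _ _ ⟨l + 2, by omega⟩).trans
      (hammingDist_le_card_of_forall_notMem {⟨l - 1, by omega⟩} fun k hk => ?_)
    have hk : k.val ≠ l - 1 := fun h => hk (mem_singleton.2 (Fin.ext h))
    exact (hardS_eq_zero_iff.2 ⟨by simp only; omega, by simp only; omega⟩).symm
  · have hq' : q.val ≤ l + 2 := by have := q.2; omega
    have hzero (k : Fin (l + 1)) := hardS_eq_zero_iff.1 (congrFun hq k)
    by_cases hq : q.val ≤ l + 1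
    · have := hzero 0
      simp only [Fin.val_zero] at this
      omega
    · have := hzero ⟨l - 1, by omega⟩
      simp only [true_and] at this
      omega

end HardInstance

theorem hard_instance_Al1_cost_one (t l : ℕ) (hl : 1 ≤ l)
    (j : Fin t) :
    cost (l + 1) (by omega) (hardS t l j) (fun _ => (0 : Fin (t + 2))) = 1 ∧
    (∀ i : Fin t, i ≠ j →
      substrDist (l + 1) (by omega) (hardS t l j i) (fun _ => (0 : Fin (t + 2))) = 0) ∧
    substrDist (l + 1) (by omega) (hardS t l j j) (fun _ => (0 : Fin (t + 2))) = 1 := by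
  refine ⟨?_, fun _ => substrDist_hardS_of_ne, substrDist_hardS_self hl⟩
  rw [cost, sum_eq_single j (fun _ _ => substrDist_hardS_of_ne) (by simp)]
  exact substrDist_hardS_self hl
end
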